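/- If F is a closed axis-aligned square of side ℓ and 𝒜 is a family of pairwise disjoint closed axis-aligned squares of side ℓ, then F intersects at most 4 members of 𝒜. -/
import Mathlib


/-- The closed axis-aligned square of side `ℓ` with bottom-left corner `c`. -/
def sqr (c : EuclideanSpace ℝ (Fin 2)) (ℓ : ℝ) : Set (EuclideanSpace ℝ (Fin 2)) :=
  {p | p 0 ∈ Set.Icc (c 0) (c 0 + ℓ) ∧ p 1 ∈ Set.Icc (c 1) (c 1 + ℓ)}

/-- If `F` is a closed axis-aligned square of side `ℓ` and `𝒜` is a family of
pairwise disjoint closed axis-aligned squares of side `ℓ`, then `F` intersects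
at most 4 members of `𝒜`. -/
theorem stmt_3 (ℓ : ℝ) (hℓ : 0 < ℓ) (c₀ : EuclideanSpace ℝ (Fin 2))
    {ι : Type*} (s : Finset ι) (c : ι → EuclideanSpace ℝ (Fin 2))
    (hdisj : ∀ i ∈ s, ∀ j ∈ s, i ≠ j → Disjoint (sqr (c i) ℓ) (sqr (c j) ℓ)) :
    {i ∈ (s : Set ι) | (sqr c₀ ℓ ∩ sqr (c i) ℓ).Nonempty}.ncard ≤ 4 := by
  classical
  set T := {i ∈ (s : Set ι) | (sqr c₀ ℓ ∩ sqr (c i) ℓ).Nonempty} with hTdef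
  let f : ι → Bool × Bool := fun i => (decide (c i 0 ≤ c₀ 0), decide (c i 1 ≤ c₀ 1))
  let pt : Bool × Bool → EuclideanSpace ℝ (Fin 2) := fun b =>
    (WithLp.equiv 2 _).symm ![if b.1 then c₀ 0 else c₀ 0 + ℓ, if b.2 then c₀ 1 else c₀ 1 + ℓ]
  have hpt0 : ∀ b, pt b 0 = if b.1 then c₀ 0 else c₀ 0 + ℓ := fun b => rfl
  have hpt1 : ∀ b, pt b 1 = if b.2 then c₀ 1 else c₀ 1 + ℓ := fun b => rfl
  have hmem : ∀ i ∈ T, pt (f i) ∈ sqr (c i) ℓ := by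
    intro i hi
    obtain ⟨p, ⟨hp0, hp1⟩, ⟨hq0, hq1⟩⟩ := hi.2
    constructor
    · rw [hpt0]; simp only [f]
      split_ifs with h
      · rw [decide_eq_true_eq] at h
        exact ⟨h, by linarith [hp0.1, hq0.2]⟩
      · rw [decide_eq_true_eq] at h; push_neg at h
        exact ⟨by linarith [hq0.1, hp0.2], by linarith⟩
    · rw [hpt1]; simp only [f]
      split_ifs with h
      · rw [decide_eq_true_eq] at h
        exact ⟨h, by linarith [hp1.1, hq1.2]⟩
      · rw [decide_eq_true_eq] at h; push_neg at h
        exact ⟨by linarith [hq1.1, hp1.2], by linarith⟩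
  have hinj : Set.InjOn f T := by
    intro i hi j hj hij
    by_contra hne
    have h1 : pt (f i) ∈ sqr (c i) ℓ := hmem i hi
    have h2 : pt (f i) ∈ sqr (c j) ℓ := hij ▸ hmem j hj
    exact (Set.disjoint_left.1 (hdisj i hi.1 j hj.1 hne)) h1 h2
  calc T.ncard = (f '' T).ncard := (Set.ncard_image_of_injOn hinj).symm
    _ ≤ (Set.univ : Set (Bool × Bool)).ncard :=
        Set.ncard_le_ncard (Set.subset_univ _) Set.finite_univ
    _ = 4 := by simp [Set.ncard_univ]
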